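/- Let X_1, ..., X_n, Y_1, ..., Y_n be 2n jointly independent Bernoulli random variables (each X_j takes values in {0,1} with P(X_j = 1) = a_j, and each Y_j takes values in {0,1} with P(Y_j = 1) = b_j), let i ∈ {1,...,n}, and let Z = ∑_{j=1}^n X_j·Y_j. Then for every t ≥ 0 such that P(Z ≥ E[Z] + t) > 0, the conditional expectation satisfies E[Y_i | Z ≥ E[Z] + t] ≥ E[Y_i]. -/

import Mathlib

open MeasureTheory ProbabilityTheory

/-- For jointly independent Bernoulli variables `X₁, …, Xₙ, Y₁, …, Yₙ` and
`Z = ∑ⱼ Xⱼ·Yⱼ`, conditioning on the upper tail event `{Z ≥ E[Z] + t}` (for `t ≥ 0`, when it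
has positive probability) does not decrease the mean of `Yᵢ`:
`E[Yᵢ | Z ≥ E[Z] + t] ≥ E[Yᵢ]`. -/
theorem bernoulli_dot_product_conditional_mean {Ω : Type*} [MeasurableSpace Ω]
    (μ : Measure Ω) [IsProbabilityMeasure μ] (n : ℕ)
    (X Y : Fin n → Ω → ℝ) (a b : Fin n → ℝ)
    (hXmeas : ∀ j, Measurable (X j)) (hYmeas : ∀ j, Measurable (Y j))
    (hXval : ∀ j ω, X j ω = 0 ∨ X j ω = 1)
    (hYval : ∀ j ω, Y j ω = 0 ∨ Y j ω = 1)
    (hXprob : ∀ j, μ {ω | X j ω = 1} = ENNReal.ofReal (a j))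
    (hYprob : ∀ j, μ {ω | Y j ω = 1} = ENNReal.ofReal (b j))
    (hindep : iIndepFun (Sum.elim X Y) μ)
    (i : Fin n)
    (Z : Ω → ℝ) (hZ : Z = fun ω => ∑ j, X j ω * Y j ω)
    (t : ℝ) (ht : 0 ≤ t)
    (A : Set Ω) (hA : A = {ω | (∫ ω', Z ω' ∂μ) + t ≤ Z ω})
    (hApos : 0 < μ A) :
    ∫ ω, Y i ω ∂μ ≤ (∫ ω in A, Y i ω ∂μ) / (μ A).toReal := by
  classical
  have hfmeas : ∀ j : Fin n ⊕ Fin n, Measurable (Sum.elim X Y j) := by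
    rintro (j | j)
    · exact hXmeas j
    · exact hYmeas j
  set c : ℝ := (∫ ω', Z ω' ∂μ) + t with hc
  set W : Ω → ℝ := fun ω => ∑ j ∈ Finset.univ.erase i, X j ω * Y j ω with hW
  have hWmeas : Measurable W := by
    apply Finset.measurable_sum
    intro j _
    exact (hXmeas j).mul (hYmeas j)
  have hZmeas : Measurable Z := by
    rw [hZ]
    exact Finset.measurable_sum _ fun j _ => (hXmeas j).mul (hYmeas j)
  have hZsplit : ∀ ω, Z ω = W ω + X i ω * Y i ω := by
    intro ω
    rw [hZ]
    exact (Finset.sum_erase_add _ _ (Finset.mem_univ i)).symm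
  set A₁ : Set Ω := {ω | c ≤ W ω + X i ω} with hA₁
  set A₀ : Set Ω := {ω | c ≤ W ω} with hA₀
  set B₁ : Set Ω := {ω | Y i ω = 1} with hB₁
  set B₀ : Set Ω := {ω | Y i ω = 0} with hB₀
  have hA₁meas : MeasurableSet A₁ := measurableSet_le measurable_const (hWmeas.add (hXmeas i))
  have hA₀meas : MeasurableSet A₀ := measurableSet_le measurable_const hWmeas
  have hB₁meas : MeasurableSet B₁ := (hYmeas i) (measurableSet_singleton 1)
  have hB₀meas : MeasurableSet B₀ := (hYmeas i) (measurableSet_singleton 0)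
  have hAmeas : MeasurableSet A := by
    rw [hA]; exact measurableSet_le measurable_const hZmeas
  -- set identities
  have hcap1 : A ∩ B₁ = A₁ ∩ B₁ := by
    ext ω
    simp only [hA, hB₁, hA₁, Set.mem_inter_iff, Set.mem_setOf_eq]
    constructor
    · rintro ⟨h1, h2⟩
      refine ⟨?_, h2⟩
      rw [hZsplit ω, h2, mul_one] at h1
      exact h1
    · rintro ⟨h1, h2⟩
      refine ⟨?_, h2⟩
      rw [hZsplit ω, h2, mul_one]
      exact h1
  have hcap0 : A ∩ B₀ = A₀ ∩ B₀ := by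
    ext ω
    simp only [hA, hB₀, hA₀, Set.mem_inter_iff, Set.mem_setOf_eq]
    constructor
    · rintro ⟨h1, h2⟩
      refine ⟨?_, h2⟩
      rw [hZsplit ω, h2, mul_zero, add_zero] at h1
      exact h1
    · rintro ⟨h1, h2⟩
      refine ⟨?_, h2⟩
      rw [hZsplit ω, h2, mul_zero, add_zero]
      exact h1
  have hsub : A₀ ⊆ A₁ := by
    intro ω h
    have hx : 0 ≤ X i ω := by rcases hXval i ω with h' | h' <;> simp [h']
    simp only [hA₀, Set.mem_setOf_eq] at h
    simp only [hA₁, Set.mem_setOf_eq]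
    linarith
  -- independence
  set S : Finset (Fin n ⊕ Fin n) := Finset.univ.erase (Sum.inr i) with hS
  set T : Finset (Fin n ⊕ Fin n) := {Sum.inr i} with hT
  have hST : Disjoint S T := by
    rw [hS, hT, Finset.disjoint_singleton_right]
    exact Finset.notMem_erase _ _
  have hIF := hindep.indepFun_finset S T hST hfmeas
  have hmemL : ∀ j : Fin n, (Sum.inl j : Fin n ⊕ Fin n) ∈ S := by
    intro j; rw [hS]; exact Finset.mem_erase.2 ⟨by simp, Finset.mem_univ _⟩
  have hmemR : ∀ j ∈ Finset.univ.erase i, (Sum.inr j : Fin n ⊕ Fin n) ∈ S := by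
    intro j hj
    rw [hS]
    exact Finset.mem_erase.2 ⟨by simpa using Finset.ne_of_mem_erase hj, Finset.mem_univ _⟩
  have hmemT : (Sum.inr i : Fin n ⊕ Fin n) ∈ T := by rw [hT]; exact Finset.mem_singleton_self _
  set F₀ : (S → ℝ) → ℝ := fun v => ∑ j ∈ (Finset.univ.erase i).attach,
      v ⟨Sum.inl j.1, hmemL j.1⟩ * v ⟨Sum.inr j.1, hmemR j.1 j.2⟩ with hF₀
  set F₁ : (S → ℝ) → ℝ := fun v => F₀ v + v ⟨Sum.inl i, hmemL i⟩ with hF₁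
  have hF₀meas : Measurable F₀ :=
    Finset.measurable_sum _ fun j _ => (measurable_pi_apply _).mul (measurable_pi_apply _)
  have hF₁meas : Measurable F₁ := hF₀meas.add (measurable_pi_apply _)
  have hg0 : ∀ ω, F₀ (fun j : S => Sum.elim X Y (↑j) ω) = W ω := by
    intro ω
    show (∑ j ∈ (Finset.univ.erase i).attach,
      Sum.elim X Y (Sum.inl j.1) ω * Sum.elim X Y (Sum.inr j.1) ω) = W ω
    simp only [Sum.elim_inl, Sum.elim_inr]
    exact Finset.sum_attach _ (fun j => X j ω * Y j ω)
  have hg1 : ∀ ω, F₁ (fun j : S => Sum.elim X Y (↑j) ω) = W ω + X i ω := by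
    intro ω
    show F₀ (fun j : S => Sum.elim X Y (↑j) ω) + Sum.elim X Y (Sum.inl i) ω = W ω + X i ω
    rw [hg0 ω]
    rfl
  have hA₁pre : A₁ = (fun ω (j : S) => Sum.elim X Y (↑j) ω) ⁻¹' {v | c ≤ F₁ v} := by
    ext ω
    simp only [Set.mem_preimage, Set.mem_setOf_eq, hA₁, hg1 ω]
  have hA₀pre : A₀ = (fun ω (j : S) => Sum.elim X Y (↑j) ω) ⁻¹' {v | c ≤ F₀ v} := by
    ext ω
    simp only [Set.mem_preimage, Set.mem_setOf_eq, hA₀, hg0 ω]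
  have hB₁pre : B₁ = (fun ω (j : T) => Sum.elim X Y (↑j) ω) ⁻¹' {v | v ⟨Sum.inr i, hmemT⟩ = 1} := by
    ext ω
    simp only [Set.mem_preimage, Set.mem_setOf_eq, hB₁]
    rfl
  have hB₀pre : B₀ = (fun ω (j : T) => Sum.elim X Y (↑j) ω) ⁻¹' {v | v ⟨Sum.inr i, hmemT⟩ = 0} := by
    ext ω
    simp only [Set.mem_preimage, Set.mem_setOf_eq, hB₀]
    rfl
  have hms1 : MeasurableSet {v : ↥S → ℝ | c ≤ F₁ v} :=
    measurableSet_le measurable_const hF₁meas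
  have hms0 : MeasurableSet {v : ↥S → ℝ | c ≤ F₀ v} :=
    measurableSet_le measurable_const hF₀meas
  have hmt1 : MeasurableSet {v : ↥T → ℝ | v ⟨Sum.inr i, hmemT⟩ = 1} :=
    (measurable_pi_apply _) (measurableSet_singleton 1)
  have hmt0 : MeasurableSet {v : ↥T → ℝ | v ⟨Sum.inr i, hmemT⟩ = 0} :=
    (measurable_pi_apply _) (measurableSet_singleton 0)
  have hind1 : μ (A₁ ∩ B₁) = μ A₁ * μ B₁ := by
    rw [hA₁pre, hB₁pre]
    exact hIF.measure_inter_preimage_eq_mul _ _ hms1 hmt1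
  have hind0 : μ (A₀ ∩ B₀) = μ A₀ * μ B₀ := by
    rw [hA₀pre, hB₀pre]
    exact hIF.measure_inter_preimage_eq_mul _ _ hms0 hmt0
  -- partition
  have hBunion : B₁ ∪ B₀ = Set.univ := by
    ext ω
    simp only [Set.mem_union, Set.mem_univ, iff_true, hB₁, hB₀, Set.mem_setOf_eq]
    rcases hYval i ω with h | h
    · exact Or.inr h
    · exact Or.inl h
  have hBdisj : Disjoint B₁ B₀ := by
    rw [Set.disjoint_left]
    intro ω h1 h0
    simp only [hB₁, Set.mem_setOf_eq] at h1
    simp only [hB₀, Set.mem_setOf_eq] at h0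
    rw [h0] at h1
    norm_num at h1
  have hdisj : Disjoint (A ∩ B₁) (A ∩ B₀) :=
    (hBdisj.mono (Set.inter_subset_right) (Set.inter_subset_right))
  have hAsum : μ A = μ (A ∩ B₁) + μ (A ∩ B₀) := by
    conv_lhs => rw [← Set.inter_univ A, ← hBunion, Set.inter_union_distrib_left]
    exact measure_union hdisj (hAmeas.inter hB₀meas)
  have hBsum : μ B₁ + μ B₀ = 1 := by
    rw [← measure_union hBdisj hB₀meas, hBunion, measure_univ]
  -- integrals
  have hYind : Y i = B₁.indicator (fun _ => (1:ℝ)) := by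
    funext ω
    rcases hYval i ω with h | h
    · rw [Set.indicator_of_notMem, h]
      simp only [hB₁, Set.mem_setOf_eq, h]
      norm_num
    · rw [Set.indicator_of_mem, h]
      simp only [hB₁, Set.mem_setOf_eq, h]
  have hint1 : ∫ ω, Y i ω ∂μ = (μ B₁).toReal := by
    rw [hYind]
    simp [MeasureTheory.integral_indicator_const (1:ℝ) hB₁meas, Measure.real]
  have hint2 : ∫ ω in A, Y i ω ∂μ = (μ (A ∩ B₁)).toReal := by
    rw [hYind, MeasureTheory.setIntegral_indicator hB₁meas]
    simp [MeasureTheory.setIntegral_const, Measure.real]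
  -- arithmetic
  have hfin : ∀ s : Set Ω, μ s ≠ ⊤ := fun s => measure_ne_top μ s
  set p : ℝ := (μ B₁).toReal with hp
  set p' : ℝ := (μ B₀).toReal with hp'
  set q₁ : ℝ := (μ A₁).toReal with hq₁
  set q₀ : ℝ := (μ A₀).toReal with hq₀
  set P : ℝ := (μ A).toReal with hP
  have hppos : 0 ≤ p := ENNReal.toReal_nonneg
  have hp'pos : 0 ≤ p' := ENNReal.toReal_nonneg
  have hq₁pos : 0 ≤ q₁ := ENNReal.toReal_nonneg
  have hq01 : q₀ ≤ q₁ := ENNReal.toReal_mono (hfin A₁) (measure_mono hsub)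
  have hpsum : p + p' = 1 := by
    rw [hp, hp', ← ENNReal.toReal_add (hfin B₁) (hfin B₀), hBsum, ENNReal.toReal_one]
  have hPpos : 0 < P := ENNReal.toReal_pos hApos.ne' (hfin A)
  have hPsplit : P = q₁ * p + q₀ * p' := by
    rw [hP, hAsum, ENNReal.toReal_add (by rw [hcap1, hind1]; exact ENNReal.mul_ne_top (hfin A₁) (hfin B₁)) (by rw [hcap0, hind0]; exact ENNReal.mul_ne_top (hfin A₀) (hfin B₀)),
      hcap1, hcap0, hind1, hind0, ENNReal.toReal_mul, ENNReal.toReal_mul]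
  have hnum : (μ (A ∩ B₁)).toReal = q₁ * p := by
    rw [hcap1, hind1, ENNReal.toReal_mul]
  rw [hint1, hint2, hnum, le_div_iff₀ hPpos, hPsplit]
  have h1 : p' = 1 - p := by linarith
  rw [h1]
  nlinarith [mul_nonneg (mul_nonneg hppos (by linarith : (0:ℝ) ≤ 1 - p)) (sub_nonneg.2 hq01)]
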